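/- Let (Ξ,ϱ) be a τ-uniformly perfect compact metric space. Set 𝒟₂ = ((1−τ)/τ)·𝒟₁ for some 𝒟₁ ≤ (τ⁴/4)·min(ℰ, diam(Ξ)/3). For any ξ₁, ξ₂ ∈ Ξ with ϱ(ξ₁,ξ₂) < 𝒟₁, there exist points α, β ∈ Ξ such that min(ϱ(α,ξ₁), ϱ(α,ξ₂), ϱ(β,ξ₁), ϱ(β,ξ₂)) ≥ (τ⁻¹ − 1)·𝒟₁ and ϱ(α,β) ≥ (τ⁻³ − τ⁻²)·𝒟₁. -/
import Mathlib

set_option maxHeartbeats 1000000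


/-- In a `τ`-uniformly perfect compact metric space, for any two points at distance `< 𝒟₁`
(with `𝒟₁ ≤ (τ⁴/4)·min(ℰ, diam Ξ / 3)`) there are two auxiliary points `α`, `β` far from
`{ξ₁, ξ₂}` and from each other. -/
theorem uniformly_perfect_auxiliary_points
    (Ξ : Type*) [MetricSpace Ξ] [CompactSpace Ξ]
    (τ : ℝ) (hτ : τ ∈ Set.Ioo (0 : ℝ) 1)
    (hup : ∀ (x : Ξ) (r : ℝ), 0 < r → Metric.ball x r ≠ Set.univ →
      (Metric.ball x r \ Metric.ball x (τ * r)).Nonempty)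
    (ℰ D₁ : ℝ) (hℰ : 0 < ℰ) (hD₁pos : 0 < D₁)
    (hD₁ : D₁ ≤ τ ^ 4 / 4 * min ℰ (Metric.diam (Set.univ : Set Ξ) / 3)) :
    ∀ ξ₁ ξ₂ : Ξ, dist ξ₁ ξ₂ < D₁ →
      ∃ α β : Ξ,
        (τ⁻¹ - 1) * D₁ ≤
          min (min (dist α ξ₁) (dist α ξ₂)) (min (dist β ξ₁) (dist β ξ₂)) ∧
        (τ⁻¹ ^ 3 - τ⁻¹ ^ 2) * D₁ ≤ dist α β := by
  intro ξ₁ ξ₂ hξ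
  obtain ⟨hτ0, hτ1⟩ := hτ
  set d := Metric.diam (Set.univ : Set Ξ) with hd
  have hinv : τ * τ⁻¹ = 1 := mul_inv_cancel₀ (ne_of_gt hτ0)
  have hi0 : 0 < τ⁻¹ := inv_pos.mpr hτ0
  have hi1 : 1 ≤ τ⁻¹ := by nlinarith [mul_pos hi0 (show (0:ℝ) < 1 - τ by linarith)]
  have hi2 : τ⁻¹ ≤ τ⁻¹ ^ 2 := by nlinarith
  have hi3 : τ⁻¹ ^ 2 ≤ τ⁻¹ ^ 3 := by nlinarith
  have hτ4 : 0 < τ ^ 4 := by positivity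
  have hmin : 0 < min ℰ (d / 3) := by nlinarith [hD₁pos, hD₁]
  have hd0 : 0 < d := by
    have := min_le_right ℰ (d / 3)
    nlinarith
  have hDd : D₁ ≤ τ ^ 4 * d / 12 := by
    have := min_le_right ℰ (d / 3)
    nlinarith
  set r : ℝ := D₁ / τ ^ 4 with hr
  have hr0 : 0 < r := by positivity
  have hrd : 12 * r ≤ d := by
    rw [hr, ← mul_div_assoc, div_le_iff₀ hτ4]
    nlinarith
  have hτ2 : τ ^ 2 ≤ 1 := by nlinarith
  have hne : ∀ s : ℝ, 0 < s → 2 * s < d → Metric.ball ξ₁ s ≠ Set.univ := by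
    intro s hs hsd h
    have h1 : Metric.diam (Metric.ball ξ₁ s) ≤ 2 * s := Metric.diam_ball hs.le
    rw [h] at h1
    linarith [h1]
  obtain ⟨α, hα1, hα2⟩ := hup ξ₁ r hr0 (hne r hr0 (by nlinarith))
  have hτ2r : 0 < τ ^ 2 * r := by positivity
  obtain ⟨β, hβ1, hβ2⟩ := hup ξ₁ (τ ^ 2 * r) hτ2r
    (hne _ hτ2r (by nlinarith))
  rw [Metric.mem_ball] at hα1 hβ1
  simp only [Metric.mem_ball, not_lt] at hα2 hβ2
  have hαlb : τ * r ≤ dist α ξ₁ := hα2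
  have hβlb : τ * (τ ^ 2 * r) ≤ dist β ξ₁ := hβ2
  have hβub : dist β ξ₁ < τ ^ 2 * r := hβ1
  have e1 : τ * r = τ⁻¹ ^ 3 * D₁ := by rw [hr]; field_simp
  have e2 : τ * (τ ^ 2 * r) = τ⁻¹ * D₁ := by rw [hr]; field_simp
  have e3 : τ ^ 2 * r = τ⁻¹ ^ 2 * D₁ := by rw [hr]; field_simp
  have m2 : τ⁻¹ * D₁ ≤ τ⁻¹ ^ 2 * D₁ := by nlinarith
  have m3 : τ⁻¹ ^ 2 * D₁ ≤ τ⁻¹ ^ 3 * D₁ := by nlinarith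
  refine ⟨α, β, ?_, ?_⟩
  · have t1 : (τ⁻¹ - 1) * D₁ ≤ dist α ξ₁ := by nlinarith
    have t2 : (τ⁻¹ - 1) * D₁ ≤ dist α ξ₂ := by
      have tri := dist_triangle α ξ₂ ξ₁
      rw [dist_comm ξ₂ ξ₁] at tri
      nlinarith
    have t3 : (τ⁻¹ - 1) * D₁ ≤ dist β ξ₁ := by nlinarith
    have t4 : (τ⁻¹ - 1) * D₁ ≤ dist β ξ₂ := by
      have tri := dist_triangle β ξ₂ ξ₁
      rw [dist_comm ξ₂ ξ₁] at tri
      nlinarith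
    simp only [le_min_iff]
    exact ⟨⟨t1, t2⟩, ⟨t3, t4⟩⟩
  · have tri := dist_triangle α β ξ₁
    nlinarith
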